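/- arXiv:2108.04959 — 6 statements merged into one kernel-verified Lean document; each statement's English description precedes it below -/
import Mathlib

section
/- Let f : [0,1] → 2^[0,1] be an upper semicontinuous set-valued function. Then f is almost nonfissile (the set of points (x,y) ∈ G(f) with f(x) a singleton is dense in G(f)) if and only if f is irreducible with respect to domain (no proper closed subset H ⊊ G(f) satisfies π₁[H] = [0,1]). -/
open Set Filter Topology

/-- The graph of a set-valued function on `[0,1]`. -/
def GraphSV (f : ℝ → Set ℝ) : Set (ℝ × ℝ) :=
  {p | p.1 ∈ Icc (0:ℝ) 1 ∧ p.2 ∈ f p.1}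

/-- Upper semicontinuous set-valued function `[0,1] → 2^[0,1]`:
nonempty compact values inside `[0,1]` and closed graph. -/
def USC (f : ℝ → Set ℝ) : Prop :=
  (∀ x ∈ Icc (0:ℝ) 1, (f x).Nonempty ∧ f x ⊆ Icc (0:ℝ) 1 ∧ IsCompact (f x)) ∧
    IsClosed (GraphSV f)

/-- The intermediate value property. -/
def IVP (f : ℝ → Set ℝ) : Prop :=
  ∀ x₁ ∈ Icc (0:ℝ) 1, ∀ x₂ ∈ Icc (0:ℝ) 1, x₁ ≠ x₂ →
    ∀ y₁ ∈ f x₁, ∀ y₂ ∈ f x₂, y₁ ≠ y₂ →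
      ∀ y ∈ Ioo (min y₁ y₂) (max y₁ y₂),
        ∃ x ∈ Ioo (min x₁ x₂) (max x₁ x₂), y ∈ f x

/-- The weak intermediate value property. -/
def WIVP (f : ℝ → Set ℝ) : Prop :=
  ∀ x₁ ∈ Icc (0:ℝ) 1, ∀ x₂ ∈ Icc (0:ℝ) 1, x₁ ≠ x₂ →
    ∀ y₁ ∈ f x₁, ∃ y₂ ∈ f x₂,
      ∀ y ∈ Icc (min y₁ y₂) (max y₁ y₂),
        ∃ x ∈ Icc (min x₁ x₂) (max x₁ x₂), y ∈ f x

/-- Weak continuity (from the left and the right) at each interior point. -/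
def WeakCont (f : ℝ → Set ℝ) : Prop :=
  ∀ x ∈ Ioo (0:ℝ) 1, ∀ y ∈ f x,
    (∃ u : ℕ → ℝ × ℝ, (∀ k, u k ∈ GraphSV f ∧ (u k).1 < x) ∧
      Tendsto u atTop (𝓝 (x, y))) ∧
    (∃ u : ℕ → ℝ × ℝ, (∀ k, u k ∈ GraphSV f ∧ x < (u k).1) ∧
      Tendsto u atTop (𝓝 (x, y)))

/-- `f` is almost nonfissile: the nonfissile points of the graph are dense in the graph. -/
def AlmostNonfissile (f : ℝ → Set ℝ) : Prop :=
  GraphSV f ⊆ closure {p | p ∈ GraphSV f ∧ f p.1 = {p.2}}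

/-- `f` is light: each fiber `{x : y ∈ f x}` has empty interior in `[0,1]`. -/
def Light (f : ℝ → Set ℝ) : Prop :=
  ∀ y : ℝ, ∀ U : Set ℝ, IsOpen U → (U ∩ Icc (0:ℝ) 1).Nonempty →
    ∃ x ∈ U ∩ Icc (0:ℝ) 1, y ∉ f x

/-- `f` is surjective onto `[0,1]`. -/
def Surj (f : ℝ → Set ℝ) : Prop :=
  ∀ y ∈ Icc (0:ℝ) 1, ∃ x ∈ Icc (0:ℝ) 1, y ∈ f x

/-- The `n`-fold set-valued composition of `f`. -/
def fIter (f : ℝ → Set ℝ) : ℕ → ℝ → Set ℝ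
  | 0, x => {x}
  | n + 1, x => ⋃ z ∈ fIter f n x, f z

/-- The image `f^n[A] = ⋃_{a ∈ A} f^n(a)`. -/
def imIter (f : ℝ → Set ℝ) (n : ℕ) (A : Set ℝ) : Set ℝ :=
  ⋃ a ∈ A, fIter f n a

/-- The inverse limit of the single bonding function `f` on `[0,1]`. -/
def InvLim (f : ℝ → Set ℝ) : Set (ℕ → ℝ) :=
  {z | (∀ i, z i ∈ Icc (0:ℝ) 1) ∧ ∀ i, z i ∈ f (z (i + 1))}

/-- `X` is irreducible between `x` and `y`: the only subcontinuum of `X`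
containing both is `X` itself. -/
def IrreducibleBetween (X : Set (ℕ → ℝ)) (x y : ℕ → ℝ) : Prop :=
  x ∈ X ∧ y ∈ X ∧
    ∀ K ⊆ X, IsCompact K → IsConnected K → x ∈ K → y ∈ K → K = X

/-! A nonfissile point `(x, y)` lies in every closed `H ⊆ G(f)` projecting onto `[0,1]`, so
such an `H` contains the closure of the nonfissile points. Conversely, irreducibility says that
every open box `U × V` meeting `G(f)` contains a whole fibre `{x} × f(x)`. Hence, for each `ε > 0`,
the points whose value lies in an `ε`-ball are dense in `[0,1]`, and open by upper
semicontinuity; by Baire the points with singleton value are dense, so they meet the nonempty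
open set `{x ∈ U | f x ⊆ V}`. -/

def IrreducibleWrtDomain (f : ℝ → Set ℝ) : Prop :=
  ∀ H ⊆ GraphSV f, IsClosed H → (∀ x ∈ Icc (0:ℝ) 1, ∃ y, (x, y) ∈ H) → H = GraphSV f

open Metric

theorem dense_setOf_subsingleton_of_upperHemicontinuous {X Y : Type*} [TopologicalSpace X]
    [BaireSpace X] [MetricSpace Y] {F : X → Set Y} (hF : UpperHemicontinuous F)
    (hdense : ∀ ε > 0, Dense {x | ∃ c, F x ⊆ ball c ε}) :
    Dense {x | (F x).Subsingleton} := by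
  have hpos (n : ℕ) : (0:ℝ) < 1 / (n + 1) := Nat.one_div_pos_of_nat
  have hopen (n : ℕ) : IsOpen {x | ∃ c, F x ⊆ ball c (1 / (n + 1))} := by
    rw [ofPred_exists]
    exact isOpen_iUnion fun c => upperHemicontinuous_iff_isOpen_preimage_Iic.1 hF _ isOpen_ball
  refine (dense_iInter_of_isOpen_nat hopen fun n => hdense _ (hpos n)).mono ?_
  intro x hx a ha b hb
  refine eq_of_forall_dist_le fun ε hε => ?_
  obtain ⟨n, hn⟩ := exists_nat_one_div_lt (half_pos hε)
  obtain ⟨c, hc⟩ := mem_iInter.1 hx n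
  linarith [dist_triangle_right a b c, mem_ball.1 (hc ha), mem_ball.1 (hc hb)]

section

variable {f : ℝ → Set ℝ}

theorem USC.isCompact_graph (hf : USC f) : IsCompact (GraphSV f) :=
  (isCompact_Icc.prod isCompact_Icc).of_isClosed_subset hf.2
    fun p hp => ⟨hp.1, (hf.1 p.1 hp.1).2.1 hp.2⟩

theorem USC.upperHemicontinuous (hf : USC f) :
    UpperHemicontinuous fun x : Icc (0:ℝ) 1 => f x := by
  rw [upperHemicontinuous_iff_isClosed_compl_preimage_Iic_compl]
  intro C hC
  have hproj : ((fun x : Icc (0:ℝ) 1 => f x) ⁻¹' Iic Cᶜ)ᶜ =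
      Subtype.val ⁻¹' (Prod.fst '' (GraphSV f ∩ univ ×ˢ C)) := by
    ext x
    simp [GraphSV, not_subset, x.2.1, x.2.2]
  rw [hproj]
  exact ((hf.isCompact_graph.inter_right (isClosed_univ.prod hC)).image
    continuous_fst).isClosed.preimage continuous_subtype_val

theorem IrreducibleWrtDomain.exists_mem_subset_of_nonempty_inter
    (hirr : IrreducibleWrtDomain f) (hf : USC f) {U V : Set ℝ} (hU : IsOpen U) (hV : IsOpen V)
    (hmeet : (GraphSV f ∩ U ×ˢ V).Nonempty) :
    ∃ x ∈ Icc (0:ℝ) 1, x ∈ U ∧ f x ⊆ V := by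
  by_contra! h
  obtain ⟨p, hpG, hpUV⟩ := hmeet
  suffices GraphSV f \ U ×ˢ V = GraphSV f from (this.symm ▸ hpG).2 hpUV
  refine hirr _ sdiff_subset (hf.2.sdiff (hU.prod hV)) fun x hx => ?_
  by_cases hxU : x ∈ U
  · obtain ⟨y, hy, hyV⟩ := not_subset.1 (h x hx hxU)
    exact ⟨y, ⟨hx, hy⟩, fun h' => hyV h'.2⟩
  · obtain ⟨y, hy⟩ := (hf.1 x hx).1
    exact ⟨y, ⟨hx, hy⟩, fun h' => hxU h'.1⟩

theorem IrreducibleWrtDomain.dense_setOf_subset_ball (hirr : IrreducibleWrtDomain f)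
    (hf : USC f) {ε : ℝ} (hε : 0 < ε) :
    Dense {x : Icc (0:ℝ) 1 | ∃ c, f x ⊆ ball c ε} := by
  refine dense_iff_inter_open.2 fun W hW ⟨x, hxW⟩ => ?_
  obtain ⟨U, hU, rfl⟩ := isOpen_induced_iff.1 hW
  obtain ⟨y, hy⟩ := (hf.1 x x.2).1
  obtain ⟨x', hx'I, hx'U, hx'V⟩ :=
    hirr.exists_mem_subset_of_nonempty_inter hf hU isOpen_ball
    ⟨(x, y), ⟨x.2, hy⟩, hxW, mem_ball_self hε⟩
  exact ⟨⟨x', hx'I⟩, hx'U, y, hx'V⟩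

theorem IrreducibleWrtDomain.almostNonfissile (hirr : IrreducibleWrtDomain f) (hf : USC f) :
    AlmostNonfissile f := by
  have hsing : Dense {x : Icc (0:ℝ) 1 | (f x).Subsingleton} :=
    dense_setOf_subsingleton_of_upperHemicontinuous hf.upperHemicontinuous
      fun ε hε => hirr.dense_setOf_subset_ball hf hε
  rintro ⟨x₀, y₀⟩ hp
  refine Metric.mem_closure_iff.2 fun ε hε => ?_
  obtain ⟨x₁, hx₁I, hx₁U, hx₁V⟩ :=
    hirr.exists_mem_subset_of_nonempty_inter hf isOpen_ball isOpen_ball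
    ⟨(x₀, y₀), hp, mem_ball_self hε, mem_ball_self hε⟩
  have hW : IsOpen ({x : Icc (0:ℝ) 1 | (x : ℝ) ∈ ball x₀ ε} ∩
      (fun x : Icc (0:ℝ) 1 => f x) ⁻¹' Iic (ball y₀ ε)) :=
    (isOpen_ball.preimage continuous_subtype_val).inter
      (upperHemicontinuous_iff_isOpen_preimage_Iic.1 hf.upperHemicontinuous _ isOpen_ball)
  obtain ⟨x, ⟨hxU, hxV⟩, hx⟩ :=
    hsing.inter_open_nonempty _ hW ⟨⟨x₁, hx₁I⟩, hx₁U, hx₁V⟩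
  obtain ⟨y, hy⟩ := (hf.1 x x.2).1
  refine ⟨(x, y), ⟨⟨x.2, hy⟩, hx.eq_singleton_of_mem hy⟩, ?_⟩
  rw [Prod.dist_eq, dist_comm x₀, dist_comm y₀]
  exact max_lt hxU (hxV hy)

theorem AlmostNonfissile.irreducibleWrtDomain (h : AlmostNonfissile f) :
    IrreducibleWrtDomain f := by
  intro H hHG hHcl hHfull
  refine hHG.antisymm (h.trans (closure_minimal ?_ hHcl))
  rintro ⟨x, y⟩ ⟨hp, hxy⟩
  obtain ⟨y', hy'⟩ := hHfull x hp.1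
  obtain rfl : y' = y := by simpa [hxy] using (hHG hy').2
  exact hy'

end

/-- `f` is almost nonfissile iff it is irreducible with respect to domain. -/
theorem stmt3 (f : ℝ → Set ℝ) (hf : USC f) :
    AlmostNonfissile f ↔
      (∀ H ⊆ GraphSV f, IsClosed H →
        (∀ x ∈ Icc (0:ℝ) 1, ∃ y, (x, y) ∈ H) → H = GraphSV f) :=
  ⟨AlmostNonfissile.irreducibleWrtDomain, fun hirr => IrreducibleWrtDomain.almostNonfissile hirr hf⟩
end

section
/- Let f : [0,1] → 2^[0,1] be upper semicontinuous, almost nonfissile, with connected graph having empty interior, and surjective. If there exist y ∈ [0,1] and a nondegenerate closed interval I ⊆ [0,1] such that y ∈ f(x) for every x ∈ I, then f(x) = {y} for every x ∈ I; that is, f is constant and single-valued on I. (Weak continuity of f is assumed.) -/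
/-
If `y ∈ f x` for all `x` near `t` in `[0,1]`, then every nonfissile graph point `(x, y')` with
`x` near `t` has `f x = {y'} ∋ y`, so `y' = y`; as these points are dense in the graph, every
`(t, s)` in the graph has `s = y`. This settles the points of the interval that are interior
relative to `[0,1]`. An endpoint lying in `(0,1)` is a limit, by weak continuity, of graph points
over the open interval, where the graph is already known to be flat.
-/

open Set Filter Topology

variable {f : ℝ → Set ℝ}

theorem AlmostNonfissile.snd_eq_of_mem_nhdsWithin (hanf : AlmostNonfissile f) {S : Set ℝ}
    {y : ℝ} (hS : ∀ x ∈ S, y ∈ f x) {p : ℝ × ℝ} (hSp : S ∈ 𝓝[Icc 0 1] p.1)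
    (hp : p ∈ GraphSV f) : p.2 = y := by
  obtain ⟨U, hU, hUS⟩ := mem_nhdsWithin_iff_exists_mem_nhds_inter.1 hSp
  have hflat : ∃ᶠ q in 𝓝 p, q ∈ {q : ℝ × ℝ | q.2 = y} := by
    refine (mem_closure_iff_frequently.1 (hanf hp)).mp
      (((continuous_fst.tendsto p).eventually hU).mono fun q hqU hq => ?_)
    have hyq : y ∈ f q.1 := hS _ (hUS ⟨hqU, hq.1.1⟩)
    rw [hq.2, mem_singleton_iff] at hyq
    exact hyq.symm
  exact (isClosed_eq continuous_snd continuous_const).mem_of_frequently_of_tendsto hflat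
    tendsto_id

theorem AlmostNonfissile.snd_eq_of_mem_closure (hanf : AlmostNonfissile f) {a b y : ℝ}
    (hyf : ∀ x ∈ Ioo a b, y ∈ f x) {p : ℝ × ℝ}
    (hp : p ∈ closure {q ∈ GraphSV f | q.1 ∈ Ioo a b}) : p.2 = y :=
  closure_minimal (fun _ hq => hanf.snd_eq_of_mem_nhdsWithin hyf
      (nhdsWithin_le_nhds (Ioo_mem_nhds hq.2.1 hq.2.2)) hq.1)
    (isClosed_eq continuous_snd continuous_const) hp

theorem WeakCont.mem_closure_right (hwc : WeakCont f) {x y c : ℝ} (hx : x ∈ Ioo 0 1)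
    (hy : y ∈ f x) (hxc : x < c) : (x, y) ∈ closure {q ∈ GraphSV f | q.1 ∈ Ioo x c} := by
  obtain ⟨-, u, hu, hlim⟩ := hwc x hx y hy
  refine mem_closure_of_tendsto hlim ?_
  filter_upwards [(continuous_fst.tendsto _).comp hlim (Iio_mem_nhds hxc)] with k hk
  exact ⟨(hu k).1, (hu k).2, hk⟩

theorem WeakCont.mem_closure_left (hwc : WeakCont f) {x y c : ℝ} (hx : x ∈ Ioo 0 1)
    (hy : y ∈ f x) (hcx : c < x) : (x, y) ∈ closure {q ∈ GraphSV f | q.1 ∈ Ioo c x} := by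
  obtain ⟨⟨u, hu, hlim⟩, -⟩ := hwc x hx y hy
  refine mem_closure_of_tendsto hlim ?_
  filter_upwards [(continuous_fst.tendsto _).comp hlim (Ioi_mem_nhds hcx)] with k hk
  exact ⟨(hu k).1, hk, (hu k).2⟩

theorem stmt5_general (f : ℝ → Set ℝ) (hanf : AlmostNonfissile f)
    (hwc : WeakCont f)
    (y : ℝ) (a b : ℝ) (hab : a < b)
    (hI : Icc a b ⊆ Icc (0:ℝ) 1) (hyf : ∀ t ∈ Icc a b, y ∈ f t) :
    ∀ t ∈ Icc a b, f t = {y} := by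
  have ha0 : 0 ≤ a := (hI (left_mem_Icc.2 hab.le)).1
  have hb1 : b ≤ 1 := (hI (right_mem_Icc.2 hab.le)).2
  have hyf' : ∀ x ∈ Ioo a b, y ∈ f x := fun x hx => hyf x (Ioo_subset_Icc_self hx)
  intro t ht
  refine eq_singleton_iff_unique_mem.2 ⟨hyf t ht, fun s hs => ?_⟩
  have hG : (t, s) ∈ GraphSV f := ⟨hI ht, hs⟩
  rcases ht.1.eq_or_lt with rfl | hat
  · rcases ha0.eq_or_lt with rfl | ha0
    · exact hanf.snd_eq_of_mem_nhdsWithin (fun x hx => hyf x (Ico_subset_Icc_self hx))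
        (nhdsWithin_mono _ Icc_subset_Ici_self (Ico_mem_nhdsGE hab)) hG
    · exact hanf.snd_eq_of_mem_closure hyf'
        (hwc.mem_closure_right ⟨ha0, hab.trans_le hb1⟩ hs hab)
  rcases ht.2.eq_or_lt with rfl | htb
  · rcases hb1.eq_or_lt with rfl | hb1
    · exact hanf.snd_eq_of_mem_nhdsWithin (fun x hx => hyf x (Ioc_subset_Icc_self hx))
        (nhdsWithin_mono _ Icc_subset_Iic_self (Ioc_mem_nhdsLE hab)) hG
    · exact hanf.snd_eq_of_mem_closure hyf'
        (hwc.mem_closure_left ⟨ha0.trans_lt hat, hb1⟩ hs hat)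
  · exact hanf.snd_eq_of_mem_nhdsWithin hyf'
      (nhdsWithin_le_nhds (Ioo_mem_nhds hat htb)) hG

/-- a common value on a nondegenerate interval forces `f` to be
constant and single-valued there. -/
theorem stmt5 (f : ℝ → Set ℝ) (hf : USC f) (hanf : AlmostNonfissile f)
    (hconn : IsConnected (GraphSV f))
    (hint : ∀ U : Set (ℝ × ℝ), IsOpen U →
      U ∩ (Icc (0:ℝ) 1 ×ˢ Icc (0:ℝ) 1) ⊆ GraphSV f →
      U ∩ (Icc (0:ℝ) 1 ×ˢ Icc (0:ℝ) 1) = ∅)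
    (hsurj : Surj f) (hwc : WeakCont f)
    (y : ℝ) (hy : y ∈ Icc (0:ℝ) 1) (a b : ℝ) (hab : a < b)
    (hI : Icc a b ⊆ Icc (0:ℝ) 1) (hyf : ∀ t ∈ Icc a b, y ∈ f t) :
    ∀ t ∈ Icc a b, f t = {y} :=
  stmt5_general f hanf hwc y a b hab hI hyf
end

section
/- Define f : [0,1] → 2^[0,1] by f(x) = {x/3} for 0 ≤ x < 1/2 and f(x) = {x/3, 2x−1} for 1/2 ≤ x ≤ 1. Then f is upper semicontinuous but does not have the weak intermediate value property. -/
open Set Filter Topology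

/-! The graph is the union of the closed segments `y = x/3` over `[0,1]` and `y = 2x - 1` over
`[1/2, 1]`, hence closed. The weak intermediate value property fails from `(1/2, 0)` towards
`x₂ = 3/10`: the only value at `3/10` is `1/10`, and the level `1/20` is attained nowhere over
`[3/10, 1/2]`, because there the branch `2x - 1` exists only at `x = 1/2`, where it is `0`. -/

def splitMap (a : ℝ) (g h : ℝ → ℝ) : ℝ → Set ℝ :=
  fun x => if x < a then {g x} else {g x, h x}

section splitMap

variable {a x y : ℝ} {g h : ℝ → ℝ}

theorem mem_splitMap : y ∈ splitMap a g h x ↔ y = g x ∨ (a ≤ x ∧ y = h x) := by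
  unfold splitMap
  split_ifs with hx
  · simp [not_le.2 hx]
  · simp [not_lt.1 hx]

theorem graphSV_splitMap : GraphSV (splitMap a g h) =
    {p | p.1 ∈ Icc (0:ℝ) 1 ∧ p.2 = g p.1} ∪ {p | p.1 ∈ Icc (0:ℝ) 1 ∧ a ≤ p.1 ∧ p.2 = h p.1} := by
  ext p
  simp only [GraphSV, mem_splitMap, mem_union, mem_ofPred_eq, and_or_left]

theorem isClosed_graphSV_splitMap (hg : Continuous g) (hh : Continuous h) :
    IsClosed (GraphSV (splitMap a g h)) := by
  have hI : IsClosed {p : ℝ × ℝ | p.1 ∈ Icc (0:ℝ) 1} := isClosed_Icc.preimage continuous_fst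
  rw [graphSV_splitMap]
  exact (hI.inter (isClosed_eq continuous_snd (hg.comp continuous_fst))).union
    (hI.inter ((isClosed_le continuous_const continuous_fst).inter
      (isClosed_eq continuous_snd (hh.comp continuous_fst))))

theorem usc_splitMap (hg : Continuous g) (hh : Continuous h)
    (hgI : MapsTo g (Icc 0 1) (Icc 0 1)) (hhI : MapsTo h (Icc a 1) (Icc 0 1)) :
    USC (splitMap a g h) := by
  refine ⟨fun x hx => ⟨⟨g x, mem_splitMap.2 (Or.inl rfl)⟩, ?_, ?_⟩,
    isClosed_graphSV_splitMap hg hh⟩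
  · intro y hy
    rcases mem_splitMap.1 hy with rfl | ⟨hax, rfl⟩
    exacts [hgI hx, hhI ⟨hax, hx.2⟩]
  · unfold splitMap
    split_ifs
    exacts [isCompact_singleton, isCompact_singleton.insert _]

end splitMap

theorem not_WIVP_splitMap_third_double :
    ¬ WIVP (splitMap (1/2) (· / 3) (fun x => 2 * x - 1)) := by
  intro hW
  obtain ⟨y₂, hy₂, hcover⟩ := hW (1/2) (by norm_num) (3/10) (by norm_num) (by norm_num) 0
    (mem_splitMap.2 (Or.inr ⟨le_rfl, by norm_num⟩))
  obtain rfl : y₂ = 1/10 := by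
    rcases mem_splitMap.1 hy₂ with h | ⟨h, -⟩
    · rw [h]; norm_num
    · norm_num at h
  obtain ⟨x, ⟨hx₁, hx₂⟩, hx⟩ := hcover (1/20) (by norm_num)
  norm_num at hx₁ hx₂
  rcases mem_splitMap.1 hx with h | ⟨-, h⟩ <;> linarith

/-- the given map is usc but lacks the weak IVP. -/
theorem stmt11 :
    USC (fun x => if x < (1:ℝ)/2 then ({x/3} : Set ℝ) else ({x/3, 2*x - 1} : Set ℝ)) ∧
      ¬ WIVP (fun x => if x < (1:ℝ)/2 then ({x/3} : Set ℝ) else ({x/3, 2*x - 1} : Set ℝ)) :=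
  ⟨usc_splitMap (by fun_prop) (by fun_prop)
      (fun x hx => ⟨by linarith [hx.1], by linarith [hx.2]⟩)
      (fun x hx => ⟨by linarith [hx.1], by linarith [hx.2]⟩),
    not_WIVP_splitMap_third_double⟩
end

section
/- Let f : [0,1] → 2^[0,1] be upper semicontinuous, surjective, with the intermediate value property. Suppose there exist p, q ∈ (0,1) and r, s ∈ ℕ with 0 ∈ f^r(p) and 1 ∈ f^s(q). Then f is organic: whenever the inverse limit lim←{[0,1], f} is irreducible between points x and y, there exists n ∈ ℕ such that f^n applied to the closed interval with endpoints x_n, y_n equals [0,1]. -/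
open Set Filter Topology

/-!
Write `I n = [x n, y n]` and `U n = ⋃ k, f^k[I (n + k)]`. The intermediate value property makes
`f` map intervals to intervals, so `x n, y n ∈ f[I (n + 1)]` gives `I n ⊆ f[I (n + 1)]`: the sets
`f^k[I (n + k)]` increase with `k`, each `U n` is an interval, and `f` maps `closure (U (n + 1))`
into `closure (U n)`. The points `z` of the inverse limit with `z n ∈ closure (U n)` for all `n`
then form a subcontinuum containing `x` and `y`, so by irreducibility they are all of it. Since
every point of `[0,1]` is a coordinate of a point of the inverse limit, `closure (U n) = [0,1]`,
hence `(0,1) ⊆ U n`. Thus `p ∈ f^k[I (r + k)]` for some `k`, so `0 ∈ f^(r+k)[I (r + k)]`;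
likewise `1 ∈ f^(s+l)[I (s + l)]`, and for `N` the larger of the two indices `f^N[I N]` is an
interval containing `0` and `1`.
-/
theorem IsCompact.isPreconnected_of_isPreconnected_fibers {α β : Type*} [TopologicalSpace α]
    [TopologicalSpace β] [T2Space β] {K : Set α} (hK : IsCompact K) {g : α → β}
    (hg : Continuous g) (himage : IsPreconnected (g '' K))
    (hfiber : ∀ z ∈ K, IsPreconnected (K ∩ g ⁻¹' {g z})) : IsPreconnected K := by
  rw [isPreconnected_iff_subset_of_disjoint_closed] at himage ⊢
  intro u v hu hv hKuv hKuv'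
  have hside : ∀ z ∈ K, K ∩ g ⁻¹' {g z} ⊆ u ∨ K ∩ g ⁻¹' {g z} ⊆ v := fun z hz =>
    isPreconnected_iff_subset_of_disjoint_closed.1 (hfiber z hz) u v hu hv
      (inter_subset_left.trans hKuv)
      (subset_eq_empty (inter_subset_inter_left _ inter_subset_left) hKuv')
  have hsep : ∀ z ∈ K, ∀ w ∈ K, g w = g z → z ∈ u → w ∈ v → False := by
    intro z hz w hw hwz hzu hwv
    rcases hside z hz with h | h
    · exact hKuv'.subset ⟨hw, h ⟨hw, hwz⟩, hwv⟩
    · exact hKuv'.subset ⟨hz, hzu, h ⟨hz, rfl⟩⟩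
  rcases himage (g '' (K ∩ u)) (g '' (K ∩ v)) ((hK.inter_right hu).image hg).isClosed
      ((hK.inter_right hv).image hg).isClosed
      (by
        rintro _ ⟨z, hz, rfl⟩
        exact (hKuv hz).imp (fun h => mem_image_of_mem g ⟨hz, h⟩)
          (fun h => mem_image_of_mem g ⟨hz, h⟩))
      (eq_empty_of_forall_notMem <| by
        rintro _ ⟨-, ⟨z, ⟨hz, hzu⟩, rfl⟩, ⟨w, ⟨hw, hwv⟩, hwz⟩⟩
        exact hsep z hz w hw hwz hzu hwv) with h | h
  · refine Or.inl fun z hz => ?_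
    obtain ⟨w, ⟨hw, hwu⟩, hwz⟩ := h ⟨z, hz, rfl⟩
    exact (hKuv hz).resolve_right (hsep w hw z hz hwz.symm hwu)
  · refine Or.inr fun z hz => ?_
    obtain ⟨w, ⟨hw, hwv⟩, hwz⟩ := h ⟨z, hz, rfl⟩
    exact (hKuv hz).resolve_left fun hzu => hsep z hz w hw hwz hzu hwv

theorem isCompact_iInter {α ι : Type*} [TopologicalSpace α] [T2Space α] [Nonempty ι]
    {G : ι → Set α} (hcompact : ∀ i, IsCompact (G i)) : IsCompact (⋂ i, G i) :=
  let ⟨i⟩ := ‹Nonempty ι›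
  (hcompact i).of_isClosed_subset (isClosed_iInter fun j => (hcompact j).isClosed)
    (iInter_subset G i)

theorem isPreconnected_iInter_of_antitone {α : Type*} [TopologicalSpace α] [T2Space α]
    {G : ℕ → Set α} (hG : Antitone G) (hcompact : ∀ m, IsCompact (G m))
    (hconn : ∀ m, IsPreconnected (G m)) : IsPreconnected (⋂ m, G m) := by
  have hC : IsCompact (⋂ m, G m) := isCompact_iInter hcompact
  rw [isPreconnected_iff_subset_of_disjoint_closed]
  intro u v hu hv hCuv hCuv'
  by_contra! h
  obtain ⟨a, haC, hav⟩ := not_subset.1 h.2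
  obtain ⟨b, hbC, hbu⟩ := not_subset.1 h.1
  obtain ⟨U, V, hU, hV, hCU, hCV, hUV⟩ := SeparatedNhds.of_isCompact_isCompact
    (hC.inter_right hu) (hC.inter_right hv)
    (disjoint_iff_inter_eq_empty.2 (by rw [inter_inter_inter_comm, inter_self, hCuv']))
  obtain ⟨m, hm⟩ := exists_subset_nhds_of_isCompact hG.directed_ge hcompact
    (U := U ∪ V) fun z hz => (hU.union hV).mem_nhds ((hCuv hz).imp (hCU ⟨hz, ·⟩) (hCV ⟨hz, ·⟩))
  obtain ⟨c, -, hcU, hcV⟩ := hconn m U V hU hV hm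
    ⟨a, mem_iInter.1 haC m, hCU ⟨haC, (hCuv haC).resolve_right hav⟩⟩
    ⟨b, mem_iInter.1 hbC m, hCV ⟨hbC, (hCuv hbC).resolve_left hbu⟩⟩
  exact disjoint_left.1 hUV hcU hcV

theorem Set.OrdConnected.Ioo_subset_of_mem_closure {α : Type*} [LinearOrder α]
    [TopologicalSpace α] [OrderClosedTopology α] {U : Set α} (hU : OrdConnected U) {a b : α}
    (ha : a ∈ closure U) (hb : b ∈ closure U) : Ioo a b ⊆ U := by
  intro c hc
  obtain ⟨a', ha'c, ha'⟩ := mem_closure_iff_nhds.1 ha (Iio c) (Iio_mem_nhds hc.1)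
  obtain ⟨b', hcb', hb'⟩ := mem_closure_iff_nhds.1 hb (Ioi c) (Ioi_mem_nhds hc.2)
  exact hU.out ha' hb' ⟨le_of_lt ha'c, le_of_lt hcb'⟩

theorem exists_mem_Icc_ne_dist_lt {t ε : ℝ} (ht : t ∈ Icc (0:ℝ) 1) (hε : 0 < ε) :
    ∃ t' ∈ Icc (0:ℝ) 1, t' ≠ t ∧ dist t' t < ε := by
  rcases ht.1.eq_or_lt with rfl | h0
  · obtain ⟨t', h1, h2⟩ := exists_between (lt_min hε one_pos)
    refine ⟨t', ⟨h1.le, (h2.trans_le (min_le_right _ _)).le⟩, h1.ne', ?_⟩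
    rw [Real.dist_eq, sub_zero, abs_of_pos h1]
    exact h2.trans_le (min_le_left _ _)
  · obtain ⟨t', h1, h2⟩ := exists_between (max_lt (sub_lt_self t hε) h0)
    refine ⟨t', ⟨(le_max_right _ _).trans h1.le, h2.le.trans ht.2⟩, h2.ne, ?_⟩
    rw [Real.dist_eq, abs_sub_lt_iff]
    constructor <;> linarith [le_max_left (t - ε) 0]

section Iterates

variable {f : ℝ → Set ℝ}

theorem imIter_zero (A : Set ℝ) : imIter f 0 A = A := by
  simp [imIter, fIter]

theorem imIter_succ (m : ℕ) (A : Set ℝ) : imIter f (m + 1) A = ⋃ b ∈ imIter f m A, f b := by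
  simp only [imIter, fIter, biUnion_iUnion]

theorem imIter_one (A : Set ℝ) : imIter f 1 A = ⋃ a ∈ A, f a := by
  rw [imIter_succ, imIter_zero]

theorem imIter_add (m n : ℕ) (A : Set ℝ) :
    imIter f (m + n) A = imIter f m (imIter f n A) := by
  induction m with
  | zero => rw [zero_add, imIter_zero]
  | succ m ih => rw [Nat.add_right_comm, imIter_succ, ih, imIter_succ]

theorem imIter_mono (n : ℕ) {A B : Set ℝ} (h : A ⊆ B) : imIter f n A ⊆ imIter f n B :=
  biUnion_subset_biUnion_left h

theorem imIter_iUnion {ι : Sort*} (n : ℕ) (A : ι → Set ℝ) :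
    imIter f n (⋃ i, A i) = ⋃ i, imIter f n (A i) :=
  biUnion_iUnion A _

theorem imIter_subset_Icc (hf : USC f) {A : Set ℝ} (hA : A ⊆ Icc 0 1) (n : ℕ) :
    imIter f n A ⊆ Icc 0 1 := by
  induction n with
  | zero => rwa [imIter_zero]
  | succ n ih =>
    rw [imIter_succ]
    exact iUnion₂_subset fun b hb => (hf.1 b (ih hb)).2.1

theorem USC.ordConnected_apply (hf : USC f) (hivp : IVP f) {t : ℝ} (ht : t ∈ Icc (0:ℝ) 1) :
    OrdConnected (f t) := by
  refine ⟨fun a ha b hb c hc => ?_⟩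
  rcases hc.1.eq_or_lt with rfl | hac
  · exact ha
  rcases hc.2.eq_or_lt with rfl | hcb
  · exact hb
  have hW : IsClosed {w | (w, c) ∈ GraphSV f} :=
    hf.2.preimage (continuous_id.prodMk continuous_const)
  suffices t ∈ closure {w | (w, c) ∈ GraphSV f} from (hW.closure_subset this).2
  rw [Metric.mem_closure_iff]
  intro ε hε
  obtain ⟨t', ht', htt', hdist⟩ := exists_mem_Icc_ne_dist_lt ht hε
  obtain ⟨v, hv⟩ := (hf.1 t' ht').1
  obtain ⟨w, hw, hcw⟩ : ∃ w ∈ uIcc t' t, c ∈ f w := by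
    rcases lt_trichotomy v c with hvc | rfl | hcv
    · obtain ⟨w, hw, hcw⟩ := hivp t' ht' t ht htt' v hv b hb (hvc.trans hcb).ne c
        ⟨by rwa [min_eq_left (hvc.trans hcb).le], by rwa [max_eq_right (hvc.trans hcb).le]⟩
      exact ⟨w, Ioo_subset_Icc_self hw, hcw⟩
    · exact ⟨t', left_mem_uIcc, hv⟩
    · obtain ⟨w, hw, hcw⟩ := hivp t' ht' t ht htt' v hv a ha (hac.trans hcv).ne' c
        ⟨by rwa [min_eq_right (hac.trans hcv).le], by rwa [max_eq_left (hac.trans hcv).le]⟩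
      exact ⟨w, Ioo_subset_Icc_self hw, hcw⟩
  refine ⟨w, ⟨ordConnected_Icc.uIcc_subset ht' ht hw, hcw⟩, ?_⟩
  rw [Real.dist_eq]
  exact (abs_sub_right_of_mem_uIcc hw).trans_lt (by rwa [abs_sub_comm, ← Real.dist_eq])

theorem USC.ordConnected_imIter_one (hf : USC f) (hivp : IVP f) {A : Set ℝ}
    (hA : OrdConnected A) (hA1 : A ⊆ Icc 0 1) : OrdConnected (imIter f 1 A) := by
  rw [imIter_one]
  refine ⟨fun v₁ hv₁ v₂ hv₂ c hc => ?_⟩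
  obtain ⟨a₁, ha₁, hv₁⟩ := mem_iUnion₂.1 hv₁
  obtain ⟨a₂, ha₂, hv₂⟩ := mem_iUnion₂.1 hv₂
  rcases hc.1.eq_or_lt with rfl | h₁
  · exact mem_biUnion ha₁ hv₁
  rcases hc.2.eq_or_lt with rfl | h₂
  · exact mem_biUnion ha₂ hv₂
  rcases eq_or_ne a₁ a₂ with rfl | hne
  · exact mem_biUnion ha₁ ((hf.ordConnected_apply hivp (hA1 ha₁)).out hv₁ hv₂ hc)
  obtain ⟨w, hw, hcw⟩ := hivp a₁ (hA1 ha₁) a₂ (hA1 ha₂) hne v₁ hv₁ v₂ hv₂ (h₁.trans h₂).ne c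
    ⟨by rwa [min_eq_left (h₁.trans h₂).le], by rwa [max_eq_right (h₁.trans h₂).le]⟩
  exact mem_biUnion (hA.uIcc_subset ha₁ ha₂ (Ioo_subset_Icc_self hw)) hcw

theorem USC.ordConnected_imIter (hf : USC f) (hivp : IVP f) {A : Set ℝ}
    (hA : OrdConnected A) (hA1 : A ⊆ Icc 0 1) (n : ℕ) : OrdConnected (imIter f n A) := by
  induction n with
  | zero => rwa [imIter_zero]
  | succ n ih =>
    rw [add_comm, imIter_add]
    exact hf.ordConnected_imIter_one hivp ih (imIter_subset_Icc hf hA1 n)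

theorem USC.imIter_one_closure_subset (hf : USC f) (hivp : IVP f) {B : Set ℝ}
    (hB : OrdConnected B) (hB1 : B ⊆ Icc 0 1) :
    imIter f 1 (closure B) ⊆ closure (imIter f 1 B) := by
  rw [imIter_one, imIter_one]
  refine iUnion₂_subset fun t ht v hv => ?_
  obtain ⟨t', ht'⟩ := closure_nonempty_iff.1 ⟨t, ht⟩
  rcases eq_or_ne t' t with rfl | htt'
  · exact subset_closure (mem_biUnion ht' hv)
  obtain ⟨v', hv'⟩ := (hf.1 t' (hB1 ht')).1
  rcases eq_or_ne v' v with rfl | hvv'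
  · exact subset_closure (mem_biUnion ht' hv')
  have hsub : Ioo (min v' v) (max v' v) ⊆ ⋃ a ∈ B, f a := fun c hc => by
    obtain ⟨w, hw, hcw⟩ := hivp t' (hB1 ht') t (closure_minimal hB1 isClosed_Icc ht) htt'
      v' hv' v hv hvv' c hc
    refine mem_biUnion (hB.Ioo_subset_of_mem_closure ?_ ?_ hw) hcw
    · exact min_rec' (· ∈ closure B) (subset_closure ht') ht
    · exact max_rec' (· ∈ closure B) (subset_closure ht') ht
  have := closure_mono hsub
  rw [closure_Ioo (min_lt_max.2 hvv').ne] at this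
  exact this ⟨min_le_right _ _, le_max_right _ _⟩

end Iterates

def partialInvLim (f : ℝ → Set ℝ) (S : ℕ → Set ℝ) (m : ℕ) : Set (ℕ → ℝ) :=
  {z | (∀ n, z n ∈ S n) ∧ ∀ i < m, z i ∈ f (z (i + 1))}

def seqCons (a : ℝ) (w : ℕ → ℝ) : ℕ → ℝ
  | 0 => a
  | n + 1 => w n

theorem continuous_seqCons (w : ℕ → ℝ) : Continuous fun a => seqCons a w :=
  continuous_pi fun n => by cases n <;> [exact continuous_id; exact continuous_const]

section PartialInvLim

variable {f : ℝ → Set ℝ} {S : ℕ → Set ℝ}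

theorem partialInvLim_antitone : Antitone (partialInvLim f S) :=
  fun _ _ hmk _ hz => ⟨hz.1, fun i hi => hz.2 i (hi.trans_le hmk)⟩

theorem isCompact_partialInvLim (hf : USC f) (hS : ∀ n, IsClosed (S n))
    (hS1 : ∀ n, S n ⊆ Icc 0 1) (m : ℕ) : IsCompact (partialInvLim f S m) := by
  have hgraph : partialInvLim f S m = {z | ∀ n, z n ∈ S n} ∩
      ⋂ i ∈ Iio m, (fun z : ℕ → ℝ => (z (i + 1), z i)) ⁻¹' GraphSV f := by
    ext z
    simp only [partialInvLim, GraphSV, mem_inter_iff, mem_iInter, mem_ofPred_eq, mem_preimage,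
      mem_Iio]
    exact and_congr_right fun hz => forall₂_congr fun i _ => (and_iff_right (hS1 _ (hz _))).symm
  refine (isCompact_univ_pi fun _ => isCompact_Icc).of_isClosed_subset ?_
    fun z hz n _ => hS1 n (hz.1 n)
  rw [hgraph, ofPred_forall]
  exact (isClosed_iInter fun n => (hS n).preimage (continuous_apply n)).inter
    (isClosed_biInter fun i _ =>
      hf.2.preimage ((continuous_apply (i + 1)).prodMk (continuous_apply i)))

theorem tail_mem_partialInvLim {m : ℕ} {z : ℕ → ℝ} (hz : z ∈ partialInvLim f S (m + 1)) :
    (fun n => z (n + 1)) ∈ partialInvLim f (fun n => S (n + 1)) m :=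
  ⟨fun n => hz.1 (n + 1), fun i hi => hz.2 (i + 1) (Nat.succ_lt_succ hi)⟩

theorem seqCons_mem_partialInvLim (hinv : ∀ t ∈ S 1, f t ⊆ S 0) {m : ℕ} {w : ℕ → ℝ}
    (hw : w ∈ partialInvLim f (fun n => S (n + 1)) m) {a : ℝ} (ha : a ∈ f (w 0)) :
    seqCons a w ∈ partialInvLim f S (m + 1) := by
  refine ⟨fun n => ?_, fun i hi => ?_⟩
  · cases n with
    | zero => exact hinv _ (hw.1 0) ha
    | succ n => exact hw.1 n
  · cases i with
    | zero => exact ha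
    | succ i => exact hw.2 i (Nat.succ_lt_succ_iff.1 hi)

/-- The tail map sends `partialInvLim f S (m + 1)` onto `partialInvLim f (S ∘ succ) m`, and its
fibre over `w` is `f (w 0)`, prepended to `w`. -/
theorem isPreconnected_partialInvLim (hf : USC f)
    (hconn : ∀ t ∈ Icc (0:ℝ) 1, IsPreconnected (f t)) (hS : ∀ n, IsClosed (S n))
    (hSconn : ∀ n, IsPreconnected (S n)) (hS1 : ∀ n, S n ⊆ Icc 0 1)
    (hinv : ∀ n, ∀ t ∈ S (n + 1), f t ⊆ S n) (m : ℕ) :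
    IsPreconnected (partialInvLim f S m) := by
  induction m generalizing S with
  | zero =>
    convert isPreconnected_univ_pi hSconn using 1
    ext z
    simp [partialInvLim]
  | succ m ih =>
    have hshift := ih (S := fun n => S (n + 1)) (fun n => hS _) (fun n => hSconn _)
      (fun n => hS1 _) fun n => hinv (n + 1)
    refine (isCompact_partialInvLim hf hS hS1 _).isPreconnected_of_isPreconnected_fibers
      (g := fun z n => z (n + 1)) (continuous_pi fun n => continuous_apply _) ?_ ?_
    · convert hshift using 1
      refine Subset.antisymm (image_subset_iff.2 fun z hz => tail_mem_partialInvLim hz)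
        fun w hw => ?_
      obtain ⟨a, ha⟩ := (hf.1 _ (hS1 1 (hw.1 0))).1
      exact ⟨seqCons a w, seqCons_mem_partialInvLim (hinv 0) hw ha, rfl⟩
    · intro z hz
      convert (hconn _ (hS1 1 (hz.1 1))).image _ (continuous_seqCons _).continuousOn using 1
      ext u
      constructor
      · rintro ⟨hu, hzu⟩
        refine ⟨u 0, ?_, funext fun n => ?_⟩
        · have := hu.2 0 (Nat.succ_pos m)
          rwa [show u 1 = z 1 from congrFun hzu 0] at this
        · cases n with
          | zero => rfl
          | succ n => exact (congrFun hzu n).symm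
      · rintro ⟨a, ha, rfl⟩
        exact ⟨seqCons_mem_partialInvLim (hinv 0) (tail_mem_partialInvLim hz) ha, rfl⟩

theorem isPreconnected_iInter_partialInvLim (hf : USC f)
    (hconn : ∀ t ∈ Icc (0:ℝ) 1, IsPreconnected (f t))
    (hS : ∀ n, IsClosed (S n)) (hSconn : ∀ n, IsPreconnected (S n))
    (hS1 : ∀ n, S n ⊆ Icc 0 1) (hinv : ∀ n, ∀ t ∈ S (n + 1), f t ⊆ S n) :
    IsPreconnected (⋂ m, partialInvLim f S m) :=
  isPreconnected_iInter_of_antitone partialInvLim_antitone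
    (isCompact_partialInvLim hf hS hS1) fun m =>
      isPreconnected_partialInvLim hf hconn hS hSconn hS1 hinv m

end PartialInvLim

theorem exists_mem_invLim_apply_eq {f : ℝ → Set ℝ} (hf : USC f) (hsurj : Surj f) {t : ℝ}
    (ht : t ∈ Icc (0:ℝ) 1) (n : ℕ) : ∃ z ∈ InvLim f, z n = t := by
  choose! img himg using fun u (hu : u ∈ Icc (0:ℝ) 1) => (hf.1 u hu).1
  choose! pre hpreI hpre using hsurj
  have himgI : MapsTo img (Icc 0 1) (Icc 0 1) := fun u hu => (hf.1 u hu).2.1 (himg u hu)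
  refine ⟨fun i => if i ≤ n then img^[n - i] t else pre^[i - n] t,
    ⟨fun i => ?_, fun i => ?_⟩, by simp⟩
  · dsimp only
    split_ifs
    exacts [himgI.iterate _ ht, MapsTo.iterate hpreI _ ht]
  · dsimp only
    obtain h | rfl | h := lt_trichotomy i n
    · rw [if_pos h.le, if_pos (Nat.succ_le_of_lt h), show n - i = n - (i + 1) + 1 by omega,
        Function.iterate_succ_apply']
      exact himg _ (himgI.iterate _ ht)
    · simpa using hpre t ht
    · rw [if_neg h.not_ge, if_neg (by omega), show i + 1 - n = i - n + 1 by omega,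
        Function.iterate_succ_apply']
      exact hpre _ (MapsTo.iterate hpreI _ ht)

def spanImage (f : ℝ → Set ℝ) (x y : ℕ → ℝ) (n k : ℕ) : Set ℝ :=
  imIter f k (uIcc (x (n + k)) (y (n + k)))

def spanUnion (f : ℝ → Set ℝ) (x y : ℕ → ℝ) (n : ℕ) : Set ℝ :=
  ⋃ k, spanImage f x y n k

section Span

variable {f : ℝ → Set ℝ} {x y : ℕ → ℝ}

theorem uIcc_subset_Icc_of_mem_invLim (hx : x ∈ InvLim f) (hy : y ∈ InvLim f) (n : ℕ) :
    uIcc (x n) (y n) ⊆ Icc 0 1 :=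
  ordConnected_Icc.uIcc_subset (hx.1 n) (hy.1 n)

theorem imIter_one_spanImage (n k : ℕ) :
    imIter f 1 (spanImage f x y (n + 1) k) = spanImage f x y n (k + 1) := by
  rw [spanImage, spanImage, ← imIter_add, add_comm 1 k, Nat.add_right_comm, add_assoc]

theorem uIcc_subset_imIter_one (hf : USC f) (hivp : IVP f) (hx : x ∈ InvLim f)
    (hy : y ∈ InvLim f) (m : ℕ) :
    uIcc (x m) (y m) ⊆ imIter f 1 (uIcc (x (m + 1)) (y (m + 1))) := by
  refine (hf.ordConnected_imIter_one hivp ordConnected_uIcc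
    (uIcc_subset_Icc_of_mem_invLim hx hy _)).uIcc_subset ?_ ?_ <;> rw [imIter_one]
  exacts [mem_biUnion left_mem_uIcc (hx.2 m), mem_biUnion right_mem_uIcc (hy.2 m)]

theorem spanImage_mono (hf : USC f) (hivp : IVP f) (hx : x ∈ InvLim f) (hy : y ∈ InvLim f)
    (n : ℕ) : Monotone (spanImage f x y n) :=
  monotone_nat_of_le_succ fun k => calc
    spanImage f x y n k ⊆ imIter f k (imIter f 1 (uIcc (x (n + k + 1)) (y (n + k + 1)))) :=
      imIter_mono k (uIcc_subset_imIter_one hf hivp hx hy _)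
    _ = spanImage f x y n (k + 1) := by rw [← imIter_add]; rfl

theorem mem_spanImage (hf : USC f) (hivp : IVP f) (hx : x ∈ InvLim f) (hy : y ∈ InvLim f)
    (n k : ℕ) : x n ∈ spanImage f x y n k ∧ y n ∈ spanImage f x y n k := by
  have h0 : spanImage f x y n 0 = uIcc (x n) (y n) := imIter_zero _
  exact ⟨spanImage_mono hf hivp hx hy n (Nat.zero_le k) (h0 ▸ left_mem_uIcc),
    spanImage_mono hf hivp hx hy n (Nat.zero_le k) (h0 ▸ right_mem_uIcc)⟩

theorem spanImage_subset_Icc (hf : USC f) (hx : x ∈ InvLim f) (hy : y ∈ InvLim f)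
    (n k : ℕ) : spanImage f x y n k ⊆ Icc 0 1 :=
  imIter_subset_Icc hf (uIcc_subset_Icc_of_mem_invLim hx hy _) k

theorem ordConnected_spanImage (hf : USC f) (hivp : IVP f) (hx : x ∈ InvLim f)
    (hy : y ∈ InvLim f) (n k : ℕ) : OrdConnected (spanImage f x y n k) :=
  hf.ordConnected_imIter hivp ordConnected_uIcc (uIcc_subset_Icc_of_mem_invLim hx hy _) k

theorem spanUnion_subset_Icc (hf : USC f) (hx : x ∈ InvLim f) (hy : y ∈ InvLim f) (n : ℕ) :
    spanUnion f x y n ⊆ Icc 0 1 :=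
  iUnion_subset (spanImage_subset_Icc hf hx hy n)

theorem ordConnected_spanUnion (hf : USC f) (hivp : IVP f) (hx : x ∈ InvLim f)
    (hy : y ∈ InvLim f) (n : ℕ) : OrdConnected (spanUnion f x y n) :=
  (isPreconnected_iUnion ⟨x n, mem_iInter.2 fun k => (mem_spanImage hf hivp hx hy n k).1⟩
    fun k => (ordConnected_spanImage hf hivp hx hy n k).isPreconnected).ordConnected

theorem apply_subset_closure_spanUnion (hf : USC f) (hivp : IVP f) (hx : x ∈ InvLim f)
    (hy : y ∈ InvLim f) (n : ℕ) {t : ℝ} (ht : t ∈ closure (spanUnion f x y (n + 1))) :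
    f t ⊆ closure (spanUnion f x y n) := by
  have hstep : imIter f 1 (spanUnion f x y (n + 1)) ⊆ spanUnion f x y n := by
    rw [spanUnion, imIter_iUnion]
    exact iUnion_subset fun k => (imIter_one_spanImage n k).subset.trans (subset_iUnion _ (k + 1))
  calc f t ⊆ imIter f 1 (closure (spanUnion f x y (n + 1))) := by
        rw [imIter_one]; exact subset_biUnion_of_mem ht
    _ ⊆ closure (imIter f 1 (spanUnion f x y (n + 1))) :=
        hf.imIter_one_closure_subset hivp (ordConnected_spanUnion hf hivp hx hy _)
          (spanUnion_subset_Icc hf hx hy _)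
    _ ⊆ closure (spanUnion f x y n) := closure_mono hstep

end Span

theorem Icc_subset_closure_spanUnion {f : ℝ → Set ℝ} (hf : USC f) (hsurj : Surj f)
    (hivp : IVP f) {x y : ℕ → ℝ} (hirr : IrreducibleBetween (InvLim f) x y) (n : ℕ) :
    Icc 0 1 ⊆ closure (spanUnion f x y n) := by
  obtain ⟨hx, hy, hmin⟩ := hirr
  set S := fun n => closure (spanUnion f x y n)
  have hS1 : ∀ n, S n ⊆ Icc 0 1 := fun n =>
    closure_minimal (spanUnion_subset_Icc hf hx hy n) isClosed_Icc
  have hmem : ∀ z ∈ InvLim f, (∀ n, z n ∈ S n) → z ∈ ⋂ m, partialInvLim f S m :=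
    fun z hz hzS => mem_iInter.2 fun _ => ⟨hzS, fun i _ => hz.2 i⟩
  have hxC := hmem x hx fun n =>
    subset_closure (mem_iUnion.2 ⟨0, (mem_spanImage hf hivp hx hy n 0).1⟩)
  have hyC := hmem y hy fun n =>
    subset_closure (mem_iUnion.2 ⟨0, (mem_spanImage hf hivp hx hy n 0).2⟩)
  have hC : ⋂ m, partialInvLim f S m = InvLim f := by
    refine hmin _ (fun z hz => ?_)
      (isCompact_iInter (isCompact_partialInvLim hf (fun _ => isClosed_closure) hS1))
      ⟨⟨x, hxC⟩, isPreconnected_iInter_partialInvLim hf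
        (fun t ht => (hf.ordConnected_apply hivp ht).isPreconnected)
        (fun _ => isClosed_closure)
        (fun n => (ordConnected_spanUnion hf hivp hx hy n).isPreconnected.closure) hS1
        fun n _ ht => apply_subset_closure_spanUnion hf hivp hx hy n ht⟩ hxC hyC
    rw [mem_iInter] at hz
    exact ⟨fun i => hS1 i ((hz 0).1 i), fun i => (hz (i + 1)).2 i (lt_add_one i)⟩
  intro t ht
  obtain ⟨z, hz, rfl⟩ := exists_mem_invLim_apply_eq hf hsurj ht n
  rw [← hC] at hz
  exact (mem_iInter.1 hz 0).1 n

theorem mem_spanImage_zero_of_mem_fIter {f : ℝ → Set ℝ} {x y : ℕ → ℝ} {n k : ℕ} {t v : ℝ}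
    (ht : t ∈ spanImage f x y n k) (hv : v ∈ fIter f n t) :
    v ∈ spanImage f x y 0 (n + k) := by
  rw [spanImage, imIter_add, zero_add]
  exact mem_biUnion ht hv

/-- if `0 ∈ f^r(p)` and `1 ∈ f^s(q)` for some `p, q ∈ (0,1)`,
then `f` is organic. -/
theorem stmt14 (f : ℝ → Set ℝ) (hf : USC f) (hsurj : Surj f) (hivp : IVP f)
    (p q : ℝ) (hp : p ∈ Ioo (0:ℝ) 1) (hq : q ∈ Ioo (0:ℝ) 1)
    (r s : ℕ) (h0 : (0:ℝ) ∈ fIter f r p) (h1 : (1:ℝ) ∈ fIter f s q) :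
    ∀ x y : ℕ → ℝ, IrreducibleBetween (InvLim f) x y →
      ∃ n : ℕ, imIter f n (uIcc (x n) (y n)) = Icc (0:ℝ) 1 := by
  intro x y hirr
  have hx := hirr.1
  have hy := hirr.2.1
  have hU : ∀ n, Ioo 0 1 ⊆ spanUnion f x y n := fun n =>
    (ordConnected_spanUnion hf hivp hx hy n).Ioo_subset_of_mem_closure
      (Icc_subset_closure_spanUnion hf hsurj hivp hirr n (left_mem_Icc.2 zero_le_one))
      (Icc_subset_closure_spanUnion hf hsurj hivp hirr n (right_mem_Icc.2 zero_le_one))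
  obtain ⟨k, hk⟩ := mem_iUnion.1 (hU r hp)
  obtain ⟨l, hl⟩ := mem_iUnion.1 (hU s hq)
  set N := max (r + k) (s + l)
  have hmono := spanImage_mono hf hivp hx hy 0
  have hN0 : 0 ∈ spanImage f x y 0 N :=
    hmono (le_max_left _ _) (mem_spanImage_zero_of_mem_fIter hk h0)
  have hN1 : 1 ∈ spanImage f x y 0 N :=
    hmono (le_max_right _ _) (mem_spanImage_zero_of_mem_fIter hl h1)
  refine ⟨N, ?_⟩
  rw [show imIter f N (uIcc (x N) (y N)) = spanImage f x y 0 N by rw [spanImage, zero_add]]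
  exact Subset.antisymm (spanImage_subset_Icc hf hx hy 0 N)
    ((ordConnected_spanImage hf hivp hx hy 0 N).out hN0 hN1)
end

section
/- Let f : [0,1] → 2^[0,1] be upper semicontinuous with the intermediate value property. Suppose there exist n ≥ 1 and closed intervals J₁ ⊆ [x,y), J₂ ⊆ [x,y], J₃ ⊆ [y,z] (with x < y < z) such that f^n[J₃] ⊇ J₂, f^n[J₂] ⊇ J₁, f^n[J₁] ⊇ [y,z] ⊇ J₃, and y ∉ J₁. Then f has a periodic cycle whose period s satisfies s | 3n, s ∤ n, and s ∤ 2n; in particular, 3 | s and s is not a power of 2. -/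
open Set Filter Topology

/-!
Upper semicontinuity and the intermediate value property of `f` pass to `f^n` in the form
`IntermediateValueOn`: a value between a value at `u` and one at `v` is taken on `[[u, v]]`
(for `u = v` this says the values are intervals). For such a map, a closest pair of preimages of
the endpoints of a covered interval spans a subinterval that still covers it and all of whose
points have a value in it. Shrinking `J₂` and then `J₃` in this way turns the covering loop
`J₃ → J₂ → J₁ → J₃` into a self-map of a subinterval of `J₃` with interval values, compact graph
and covering its domain; connectedness gives it a fixed point, i.e. a loop `t → s₁ → s₂ → t`
under `f^n` with `s₂ < y ≤ t`. The orbit through it has period `3n` but not `2n`, since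
`q 0 = t ≠ s₂ = q (2n)`, so its minimal period divides `3n` but not `n`, and `3` divides it.
-/

open scoped Interval
open Function

theorem left_mem_uIcc_or_right_mem_uIcc_of_notMem {c d w : ℝ} (hw : w ∉ [[c, d]]) :
    c ∈ [[w, d]] ∨ d ∈ [[c, w]] := by
  simp only [mem_uIcc] at *
  grind

theorem dist_lt_of_mem_uIcc_of_ne {u v t : ℝ} (ht : t ∈ [[u, v]]) (htu : t ≠ u) :
    dist t v < dist u v := by
  rw [Real.dist_eq, Real.dist_eq]
  rcases mem_uIcc.1 ht with ⟨h₁, h₂⟩ | ⟨h₁, h₂⟩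
  · rw [abs_of_nonpos (by linarith), abs_of_nonpos (by linarith)]
    linarith [lt_of_le_of_ne h₁ (Ne.symm htu)]
  · rw [abs_of_nonneg (by linarith), abs_of_nonneg (by linarith)]
    linarith [lt_of_le_of_ne h₂ htu]

theorem mem_closure_Icc_diff_singleton {a b u : ℝ} (hab : a < b) (hu : u ∈ Icc a b) :
    u ∈ closure (Icc a b \ {u}) := by
  rcases hu.2.lt_or_eq with hub | rfl
  · refine closure_mono (s := Ioo u b) (t := Icc a b \ {u})
      (fun x hx => ⟨⟨hu.1.trans hx.1.le, hx.2.le⟩, hx.1.ne'⟩) ?_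
    rw [closure_Ioo hub.ne]
    exact left_mem_Icc.2 hub.le
  · refine closure_mono (s := Ioo a u) (t := Icc a u \ {u})
      (fun x hx => ⟨⟨hx.1.le, hx.2.le⟩, hx.2.ne⟩) ?_
    rw [closure_Ioo hab.ne]
    exact right_mem_Icc.2 hab.le

namespace SetValuedMap

def graphOver (g : ℝ → Set ℝ) (D : Set ℝ) : Set (ℝ × ℝ) :=
  {p | p.1 ∈ D ∧ p.2 ∈ g p.1}

def kcomp (g h : ℝ → Set ℝ) : ℝ → Set ℝ :=
  fun x => ⋃ z ∈ g x, h z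

def IntermediateValueOn (g : ℝ → Set ℝ) (D : Set ℝ) : Prop :=
  ∀ u ∈ D, ∀ v ∈ D, ∀ y₁ ∈ g u, ∀ y₂ ∈ g v, ∀ y ∈ [[y₁, y₂]], ∃ x ∈ [[u, v]], y ∈ g x

variable {g h : ℝ → Set ℝ} {D D' E K : Set ℝ}

@[simp]
theorem mem_kcomp {x w : ℝ} : w ∈ kcomp g h x ↔ ∃ z ∈ g x, w ∈ h z := by
  simp [kcomp]

theorem isCompact_graphOver_kcomp (hg : IsCompact (graphOver g D)) (hh : IsCompact (graphOver h E))
    (hgE : ∀ x ∈ D, g x ⊆ E) : IsCompact (graphOver (kcomp g h) D) := by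
  have hC : IsCompact ((graphOver g D ×ˢ graphOver h E) ∩ {q | q.1.2 = q.2.1}) :=
    (hg.prod hh).inter_right (isClosed_eq (by fun_prop) (by fun_prop))
  convert hC.image (f := fun q => (q.1.1, q.2.2)) (by fun_prop) using 1
  ext ⟨x, w⟩
  simp only [graphOver, mem_kcomp, mem_ofPred_eq, mem_image, mem_inter_iff, mem_prod,
    Prod.exists, Prod.mk.injEq]
  constructor
  · rintro ⟨hx, z, hz, hw⟩
    exact ⟨x, z, z, w, ⟨⟨⟨hx, hz⟩, hgE x hx hz, hw⟩, rfl⟩, rfl, rfl⟩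
  · rintro ⟨x, z, _, w, ⟨⟨⟨hx, hz⟩, -, hw⟩, rfl⟩, rfl, rfl⟩
    exact ⟨hx, z, hz, hw⟩

theorem isCompact_graphOver_restrict (hg : IsCompact (graphOver g D)) (hD' : IsClosed D')
    (hK : IsClosed K) (hD'D : D' ⊆ D) : IsCompact (graphOver (fun x => g x ∩ K) D') := by
  convert hg.inter_right (hD'.prod hK) using 1
  ext ⟨x, w⟩
  simp only [graphOver, mem_ofPred_eq, mem_inter_iff, mem_prod]
  exact ⟨fun ⟨hx, hw, hwK⟩ => ⟨⟨hD'D hx, hw⟩, hx, hwK⟩, fun ⟨⟨_, hw⟩, hx, hwK⟩ => ⟨hx, hw, hwK⟩⟩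

theorem isCompact_graphOver_singleton (hD : IsCompact D) :
    IsCompact (graphOver (fun x => {x}) D) := by
  convert hD.image (f := fun x => (x, x)) (by fun_prop) using 1
  ext ⟨x, w⟩
  simp only [graphOver, mem_ofPred_eq, mem_singleton_iff, mem_image, Prod.mk.injEq]
  constructor
  · rintro ⟨hx, rfl⟩; exact ⟨w, hx, rfl, rfl⟩
  · rintro ⟨x, hx, rfl, rfl⟩; exact ⟨hx, rfl⟩

namespace IntermediateValueOn

theorem singleton : IntermediateValueOn (fun x => {x}) D := by
  rintro u - v - _ rfl _ rfl y hy
  exact ⟨y, hy, rfl⟩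

theorem kcomp (hg : IntermediateValueOn g D) (hh : IntermediateValueOn h E)
    (hgE : ∀ x ∈ D, g x ⊆ E) : IntermediateValueOn (kcomp g h) D := by
  intro u hu v hv y₁ hy₁ y₂ hy₂ y hy
  rw [mem_kcomp] at hy₁ hy₂
  obtain ⟨z₁, hz₁, hy₁⟩ := hy₁
  obtain ⟨z₂, hz₂, hy₂⟩ := hy₂
  obtain ⟨ζ, hζ, hyζ⟩ := hh z₁ (hgE u hu hz₁) z₂ (hgE v hv hz₂) y₁ hy₁ y₂ hy₂ y hy
  obtain ⟨x, hx, hζx⟩ := hg u hu v hv z₁ hz₁ z₂ hz₂ ζ hζ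
  exact ⟨x, hx, mem_kcomp.2 ⟨ζ, hζx, hyζ⟩⟩

theorem restrict (hg : IntermediateValueOn g D) (hD'D : D' ⊆ D) (hK : K.OrdConnected) :
    IntermediateValueOn (fun x => g x ∩ K) D' := by
  intro u hu v hv y₁ hy₁ y₂ hy₂ y hy
  obtain ⟨x, hx, hyx⟩ := hg u (hD'D hu) v (hD'D hv) y₁ hy₁.1 y₂ hy₂.1 y hy
  exact ⟨x, hx, hyx, hK.uIcc_subset hy₁.2 hy₂.2 hy⟩

theorem uIcc_subset (hg : IntermediateValueOn g D) {u y₁ y₂ : ℝ} (hu : u ∈ D)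
    (hy₁ : y₁ ∈ g u) (hy₂ : y₂ ∈ g u) : [[y₁, y₂]] ⊆ g u := by
  intro y hy
  obtain ⟨x, hx, hyx⟩ := hg u hu u hu y₁ hy₁ y₂ hy₂ y hy
  rwa [uIcc_self, mem_singleton_iff.1 hx] at *

theorem exists_uIcc_covering (hg : IntermediateValueOn g D) (hgc : IsClosed (graphOver g D))
    (hne : ∀ x ∈ D, (g x).Nonempty) {J : Set ℝ} (hJ : IsCompact J) (hJo : J.OrdConnected)
    (hJD : J ⊆ D) {c d : ℝ} (hcov : [[c, d]] ⊆ ⋃ t ∈ J, g t) :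
    ∃ u ∈ J, ∃ v ∈ J, [[c, d]] ⊆ (⋃ t ∈ [[u, v]], g t) ∧
      ∀ t ∈ [[u, v]], (g t ∩ [[c, d]]).Nonempty := by
  set P : Set (ℝ × ℝ) := (J ×ˢ J) ∩ {p | c ∈ g p.1 ∧ d ∈ g p.2}
  have hPc : IsCompact P := by
    refine (hJ.prod hJ).of_isClosed_subset ?_ inter_subset_left
    have hP : P = (J ×ˢ J) ∩ ((fun p => (p.1, c)) ⁻¹' graphOver g D ∩
        (fun p => (p.2, d)) ⁻¹' graphOver g D) := by
      ext ⟨u, v⟩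
      simp only [P, graphOver, mem_inter_iff, mem_prod, mem_preimage, mem_ofPred_eq]
      exact ⟨fun ⟨⟨hu, hv⟩, h⟩ => ⟨⟨hu, hv⟩, ⟨hJD hu, h.1⟩, hJD hv, h.2⟩,
        fun ⟨huv, ⟨_, hc⟩, _, hd⟩ => ⟨huv, hc, hd⟩⟩
    rw [hP]
    exact (hJ.prod hJ).isClosed.inter ((hgc.preimage (by fun_prop)).inter
      (hgc.preimage (by fun_prop)))
  have hPne : P.Nonempty := by
    obtain ⟨u, hu, hcu⟩ := mem_iUnion₂.1 (hcov left_mem_uIcc)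
    obtain ⟨v, hv, hdv⟩ := mem_iUnion₂.1 (hcov right_mem_uIcc)
    exact ⟨(u, v), ⟨hu, hv⟩, hcu, hdv⟩
  -- A closest pair with `c ∈ g u`, `d ∈ g v`: a point of `[[u, v]]` with no value in `[[c, d]]`
  -- would give a closer one.
  obtain ⟨⟨u, v⟩, ⟨⟨hu, hv⟩, hcu, hdv⟩, hmin⟩ :=
    hPc.exists_isMinOn hPne (f := fun p => dist p.1 p.2) (by fun_prop)
  have huvJ : [[u, v]] ⊆ J := hJo.uIcc_subset hu hv
  refine ⟨u, hu, v, hv, fun w hw => ?_, fun t ht => ?_⟩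
  · obtain ⟨x, hx, hwx⟩ := hg u (hJD hu) v (hJD hv) c hcu d hdv w hw
    exact mem_iUnion₂.2 ⟨x, hx, hwx⟩
  by_contra hempty
  have htu : t ≠ u := by rintro rfl; exact hempty ⟨c, hcu, left_mem_uIcc⟩
  have htv : t ≠ v := by rintro rfl; exact hempty ⟨d, hdv, right_mem_uIcc⟩
  obtain ⟨w, hw⟩ := hne t (hJD (huvJ ht))
  rcases left_mem_uIcc_or_right_mem_uIcc_of_notMem (fun hwcd => hempty ⟨w, hw, hwcd⟩) with
    hc | hd
  · obtain ⟨x, hx, hcx⟩ := hg t (hJD (huvJ ht)) v (hJD hv) w hw d hdv c hc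
    have hxJ : x ∈ J := hJo.uIcc_subset (huvJ ht) hv hx
    have : dist u v ≤ dist x v := hmin (a := (x, v)) ⟨⟨hxJ, hv⟩, hcx, hdv⟩
    linarith [Real.dist_right_le_of_mem_uIcc hx, dist_lt_of_mem_uIcc_of_ne ht htu]
  · obtain ⟨x, hx, hdx⟩ := hg u (hJD hu) t (hJD (huvJ ht)) c hcu w hw d hd
    have hxJ : x ∈ J := hJo.uIcc_subset hu (huvJ ht) hx
    have : dist u v ≤ dist u x := hmin (a := (u, x)) ⟨⟨hu, hxJ⟩, hcu, hdx⟩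
    have := dist_lt_of_mem_uIcc_of_ne (uIcc_comm u v ▸ ht) htv
    rw [dist_comm t, dist_comm v] at this
    linarith [Real.dist_left_le_of_mem_uIcc hx]

theorem exists_mem_self {a b : ℝ} (hab : a ≤ b) (hg : IntermediateValueOn g (Icc a b))
    (hgc : IsCompact (graphOver g (Icc a b))) (hne : ∀ x ∈ Icc a b, (g x).Nonempty)
    (hcov : Icc a b ⊆ ⋃ t ∈ Icc a b, g t) : ∃ t ∈ Icc a b, t ∈ g t := by
  set A := Prod.fst '' (graphOver g (Icc a b) ∩ {p | p.2 ≤ p.1})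
  set B := Prod.fst '' (graphOver g (Icc a b) ∩ {p | p.1 ≤ p.2})
  have hA : IsClosed A :=
    ((hgc.inter_right (isClosed_le continuous_snd continuous_fst)).image continuous_fst).isClosed
  have hB : IsClosed B :=
    ((hgc.inter_right (isClosed_le continuous_fst continuous_snd)).image continuous_fst).isClosed
  have hAB : Icc a b ⊆ A ∪ B := by
    intro t ht
    obtain ⟨w, hw⟩ := hne t ht
    rcases le_total w t with hwt | htw
    · exact Or.inl ⟨(t, w), ⟨⟨ht, hw⟩, hwt⟩, rfl⟩
    · exact Or.inr ⟨(t, w), ⟨⟨ht, hw⟩, htw⟩, rfl⟩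
  have hIA : (Icc a b ∩ A).Nonempty := by
    obtain ⟨t, ht, hat⟩ := mem_iUnion₂.1 (hcov (left_mem_Icc.2 hab))
    exact ⟨t, ht, (t, a), ⟨⟨ht, hat⟩, ht.1⟩, rfl⟩
  have hIB : (Icc a b ∩ B).Nonempty := by
    obtain ⟨t, ht, hbt⟩ := mem_iUnion₂.1 (hcov (right_mem_Icc.2 hab))
    exact ⟨t, ht, (t, b), ⟨⟨ht, hbt⟩, ht.2⟩, rfl⟩
  obtain ⟨t, ht, ⟨⟨_, w₁⟩, ⟨⟨-, hw₁⟩, hw₁t⟩, rfl⟩, ⟨⟨_, w₂⟩, ⟨⟨-, hw₂⟩, htw₂⟩, h₂⟩⟩ :=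
    isPreconnected_closed_iff.1 isPreconnected_Icc A B hA hB hAB hIA hIB
  dsimp only at h₂ hw₁t htw₂
  subst h₂
  exact ⟨_, ht, hg.uIcc_subset ht hw₁ hw₂ (mem_uIcc_of_le hw₁t htw₂)⟩

end IntermediateValueOn

theorem exists_three_cycle_of_covers (hg : IntermediateValueOn g D)
    (hgc : IsCompact (graphOver g D)) (hne : ∀ x ∈ D, (g x).Nonempty) {J₂ J₃ : Set ℝ} {a b : ℝ}
    (hJ₃ : IsCompact J₃) (hJ₃o : J₃.OrdConnected) (hJ₃D : J₃ ⊆ D)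
    (hJ₂ : IsCompact J₂) (hJ₂o : J₂.OrdConnected) (hJ₂D : J₂ ⊆ D) (hJ₁D : [[a, b]] ⊆ D)
    (h₃₂ : J₂ ⊆ ⋃ t ∈ J₃, g t) (h₂₁ : [[a, b]] ⊆ ⋃ t ∈ J₂, g t)
    (h₁₃ : J₃ ⊆ ⋃ t ∈ [[a, b]], g t) :
    ∃ t ∈ J₃, ∃ s₁ ∈ g t, ∃ s₂ ∈ g s₁, s₂ ∈ [[a, b]] ∧ t ∈ g s₂ := by
  obtain ⟨u₂, hu₂, v₂, hv₂, hcov₂, hne₂⟩ :=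
    hg.exists_uIcc_covering hgc.isClosed hne hJ₂ hJ₂o hJ₂D h₂₁
  have hI₂ : [[u₂, v₂]] ⊆ J₂ := hJ₂o.uIcc_subset hu₂ hv₂
  obtain ⟨u₃, hu₃, v₃, hv₃, hcov₃, hne₃⟩ :=
    hg.exists_uIcc_covering hgc.isClosed hne hJ₃ hJ₃o hJ₃D (hI₂.trans h₃₂)
  have hI₃ : [[u₃, v₃]] ⊆ J₃ := hJ₃o.uIcc_subset hu₃ hv₃
  set g₃ := fun x => g x ∩ [[u₂, v₂]]
  set g₂ := fun x => g x ∩ [[a, b]]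
  set G := kcomp (kcomp g₃ g₂) g
  have hg₂₃ : ∀ x, kcomp g₃ g₂ x ⊆ D := fun x w hw => by
    obtain ⟨_, -, hw⟩ := mem_kcomp.1 hw
    exact hJ₁D hw.2
  have hG : IntermediateValueOn G [[u₃, v₃]] :=
    ((hg.restrict (hI₃.trans hJ₃D) ordConnected_uIcc).kcomp
      (hg.restrict (hI₂.trans hJ₂D) ordConnected_uIcc) fun _ _ => inter_subset_right).kcomp
      hg fun x _ => hg₂₃ x
  have hGc : IsCompact (graphOver G [[u₃, v₃]]) :=
    isCompact_graphOver_kcomp (isCompact_graphOver_kcomp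
      (isCompact_graphOver_restrict hgc isClosed_Icc isClosed_Icc (hI₃.trans hJ₃D))
      (isCompact_graphOver_restrict hgc isClosed_Icc isClosed_Icc (hI₂.trans hJ₂D))
      fun _ _ => inter_subset_right) hgc fun x _ => hg₂₃ x
  have hGne : ∀ t ∈ [[u₃, v₃]], (G t).Nonempty := by
    intro t ht
    obtain ⟨s₁, hs₁⟩ := hne₃ t ht
    obtain ⟨s₂, hs₂⟩ := hne₂ s₁ hs₁.2
    obtain ⟨w, hw⟩ := hne s₂ (hJ₁D hs₂.2)
    exact ⟨w, mem_kcomp.2 ⟨s₂, mem_kcomp.2 ⟨s₁, hs₁, hs₂⟩, hw⟩⟩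
  have hGcov : [[u₃, v₃]] ⊆ ⋃ t ∈ [[u₃, v₃]], G t := by
    intro w hw
    obtain ⟨s₂, hs₂, hws₂⟩ := mem_iUnion₂.1 (h₁₃ (hI₃ hw))
    obtain ⟨s₁, hs₁, hs₂s₁⟩ := mem_iUnion₂.1 (hcov₂ hs₂)
    obtain ⟨t, ht, hs₁t⟩ := mem_iUnion₂.1 (hcov₃ hs₁)
    exact mem_iUnion₂.2 ⟨t, ht, mem_kcomp.2 ⟨s₂, mem_kcomp.2 ⟨s₁, ⟨hs₁t, hs₁⟩, hs₂s₁, hs₂⟩, hws₂⟩⟩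
  obtain ⟨t, ht, htG⟩ := hG.exists_mem_self inf_le_sup hGc hGne hGcov
  obtain ⟨s₂, hs₂, hts₂⟩ := mem_kcomp.1 htG
  obtain ⟨s₁, hs₁, hs₂s₁⟩ := mem_kcomp.1 hs₂
  exact ⟨t, hI₃ ht, s₁, hs₁.1, s₂, hs₂s₁.1, hs₂s₁.2, hts₂⟩

end SetValuedMap

open SetValuedMap

section

variable {f : ℝ → Set ℝ}

-- `fIter f (n + 1)` is definitionally `kcomp (fIter f n) f`; the proofs below use this freely.

theorem mem_fIter_add {a b : ℕ} {x z w : ℝ} (hz : z ∈ fIter f a x) (hw : w ∈ fIter f b z) :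
    w ∈ fIter f (a + b) x := by
  induction b generalizing w with
  | zero => rwa [mem_singleton_iff.1 hw]
  | succ b ih =>
    obtain ⟨z', hz', hwz'⟩ := mem_kcomp.1 hw
    exact mem_kcomp.2 ⟨z', ih hz', hwz'⟩

namespace USC

theorem isCompact_graphSV (hf : USC f) : IsCompact (GraphSV f) :=
  (isCompact_Icc.prod isCompact_Icc).of_isClosed_subset hf.2
    fun _ hp => ⟨hp.1, (hf.1 _ hp.1).2.1 hp.2⟩

theorem fIter_subset (hf : USC f) (n : ℕ) {x : ℝ} (hx : x ∈ Icc (0:ℝ) 1) :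
    fIter f n x ⊆ Icc 0 1 := by
  induction n with
  | zero => simpa [fIter] using hx
  | succ n ih =>
    intro w hw
    obtain ⟨z, hz, hwz⟩ := mem_kcomp.1 hw
    exact (hf.1 z (ih hz)).2.1 hwz

theorem imIter_subset (hf : USC f) (n : ℕ) {A : Set ℝ} (hA : A ⊆ Icc 0 1) :
    imIter f n A ⊆ Icc 0 1 :=
  iUnion₂_subset fun _ ha => hf.fIter_subset n (hA ha)

theorem fIter_nonempty (hf : USC f) (n : ℕ) {x : ℝ} (hx : x ∈ Icc (0:ℝ) 1) :
    (fIter f n x).Nonempty := by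
  induction n with
  | zero => exact singleton_nonempty x
  | succ n ih =>
    obtain ⟨z, hz⟩ := ih
    obtain ⟨w, hw⟩ := (hf.1 z (hf.fIter_subset n hx hz)).1
    exact ⟨w, mem_kcomp.2 ⟨z, hz, hw⟩⟩

theorem isCompact_graphOver_fIter (hf : USC f) (n : ℕ) :
    IsCompact (graphOver (fIter f n) (Icc 0 1)) := by
  induction n with
  | zero => exact isCompact_graphOver_singleton isCompact_Icc
  | succ n ih =>
    exact isCompact_graphOver_kcomp ih hf.isCompact_graphSV fun _ => hf.fIter_subset n

end USC

namespace IVP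

theorem exists_mem_uIcc (hivp : IVP f) {u v y₁ y₂ y : ℝ} (hu : u ∈ Icc (0:ℝ) 1)
    (hv : v ∈ Icc (0:ℝ) 1) (huv : u ≠ v) (hy₁ : y₁ ∈ f u) (hy₂ : y₂ ∈ f v)
    (hy : y ∈ [[y₁, y₂]]) : ∃ x ∈ [[u, v]], y ∈ f x := by
  by_cases h₁ : y = y₁
  · exact ⟨u, left_mem_uIcc, h₁ ▸ hy₁⟩
  by_cases h₂ : y = y₂
  · exact ⟨v, right_mem_uIcc, h₂ ▸ hy₂⟩
  have hy' : y ∈ Ioo (min y₁ y₂) (max y₁ y₂) := by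
    simp only [mem_uIcc, mem_Ioo] at hy ⊢
    grind
  obtain ⟨x, hx, hyx⟩ := hivp u hu v hv huv y₁ hy₁ y₂ hy₂ (by grind) y hy'
  exact ⟨x, Ioo_subset_Icc_self hx, hyx⟩

theorem uIcc_subset (hf : USC f) (hivp : IVP f) {u y₁ y₂ : ℝ} (hu : u ∈ Icc (0:ℝ) 1)
    (hy₁ : y₁ ∈ f u) (hy₂ : y₂ ∈ f u) : [[y₁, y₂]] ⊆ f u := by
  intro y hy
  have hnear : ∀ v ∈ Icc (0:ℝ) 1, v ≠ u → ∃ x ∈ [[u, v]], y ∈ f x := by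
    intro v hv hvu
    obtain ⟨y', hy'⟩ := (hf.1 v hv).1
    rcases uIcc_subset_uIcc_union_uIcc (b := y') hy with h | h
    · exact hivp.exists_mem_uIcc hu hv hvu.symm hy₁ hy' h
    · exact hivp.exists_mem_uIcc hu hv hvu.symm hy₂ hy' (uIcc_comm y' y₂ ▸ h)
  -- `y` is a value at points arbitrarily close to `u`, and the graph is closed
  have hcl : (u, y) ∈ closure (GraphSV f) := by
    refine Metric.mem_closure_iff.2 fun ε hε => ?_
    obtain ⟨v, ⟨hv, hvu⟩, huv⟩ :=
      Metric.mem_closure_iff.1 (mem_closure_Icc_diff_singleton zero_lt_one hu) ε hε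
    obtain ⟨x, hx, hyx⟩ := hnear v hv hvu
    refine ⟨(x, y), ⟨ordConnected_Icc.uIcc_subset hu hv hx, hyx⟩, ?_⟩
    rw [Prod.dist_eq, dist_self, max_eq_left dist_nonneg]
    exact (Real.dist_left_le_of_mem_uIcc hx).trans_lt huv
  exact (hf.2.closure_eq ▸ hcl).2

theorem intermediateValueOn (hf : USC f) (hivp : IVP f) :
    IntermediateValueOn f (Icc 0 1) := by
  intro u hu v hv y₁ hy₁ y₂ hy₂ y hy
  rcases eq_or_ne u v with rfl | huv
  · exact ⟨u, left_mem_uIcc, uIcc_subset hf hivp hu hy₁ hy₂ hy⟩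
  · exact hivp.exists_mem_uIcc hu hv huv hy₁ hy₂ hy

theorem intermediateValueOn_fIter (hf : USC f) (hivp : IVP f) (n : ℕ) :
    IntermediateValueOn (fIter f n) (Icc 0 1) := by
  induction n with
  | zero => exact IntermediateValueOn.singleton
  | succ n ih => exact ih.kcomp (intermediateValueOn hf hivp) fun _ => hf.fIter_subset n

end IVP

theorem exists_chain_extend {c : ℕ → ℝ} {k : ℕ} (hc : ∀ i < k, c (i + 1) ∈ f (c i)) {n : ℕ}
    {w : ℝ} (hw : w ∈ fIter f n (c k)) :
    ∃ c' : ℕ → ℝ, (∀ i ≤ k, c' i = c i) ∧ c' (k + n) = w ∧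
      ∀ i < k + n, c' (i + 1) ∈ f (c' i) := by
  induction n generalizing w with
  | zero => exact ⟨c, fun _ _ => rfl, (mem_singleton_iff.1 hw).symm, hc⟩
  | succ n ih =>
    obtain ⟨z, hz, hwz⟩ := mem_kcomp.1 hw
    obtain ⟨c', hc'k, hc'z, hc'⟩ := ih hz
    refine ⟨update c' (k + n + 1) w, fun i hi => ?_, update_self .., fun i hi => ?_⟩
    · rw [update_of_ne (by omega), hc'k i hi]
    · rcases Nat.lt_or_ge i (k + n) with hi | hi
      · rw [update_of_ne (by omega), update_of_ne (by omega)]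
        exact hc' i hi
      · obtain rfl : i = k + n := by omega
        rw [update_self, update_of_ne (by omega), hc'z]
        exact hwz

theorem periodic_orbit_of_chain {c : ℕ → ℝ} {m : ℕ} (hm : 0 < m)
    (hc : ∀ i < m, c (i + 1) ∈ f (c i)) (hcm : c m = c 0) :
    Periodic (fun i => c (i % m)) m ∧ ∀ i, c ((i + 1) % m) ∈ f (c (i % m)) := by
  refine ⟨fun i => by simp only [Nat.add_mod_right], fun i => ?_⟩
  have hi := Nat.mod_lt i hm
  rw [← Nat.mod_add_mod]
  rcases (show i % m + 1 ≤ m from hi).lt_or_eq with h | h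
  · rw [Nat.mod_eq_of_lt h]
    exact hc _ hi
  · have := hc _ hi
    rw [h] at this
    rwa [h, Nat.mod_self, ← hcm]

theorem exists_periodic_orbit {x z : ℝ} {k l : ℕ} (hl : 0 < l) (hz : z ∈ fIter f k x)
    (hx : x ∈ fIter f l z) :
    ∃ q : ℕ → ℝ, q 0 = x ∧ q k = z ∧ Periodic q (k + l) ∧ ∀ i, q (i + 1) ∈ f (q i) := by
  obtain ⟨c₁, hc₁x, hc₁z, hc₁⟩ := exists_chain_extend (c := fun _ => x) (k := 0) (by simp) hz
  rw [zero_add] at hc₁z hc₁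
  obtain ⟨c, hcc₁, hcx, hc⟩ := exists_chain_extend hc₁ (hc₁z ▸ hx)
  have hc0 : c 0 = x := (hcc₁ 0 (Nat.zero_le k)).trans (hc₁x 0 le_rfl)
  obtain ⟨hper, hstep⟩ := periodic_orbit_of_chain (by omega) hc (hcx.trans hc0.symm)
  refine ⟨fun i => c (i % (k + l)), ?_, ?_, hper, hstep⟩
  · simpa using hc0
  · simp only [Nat.mod_eq_of_lt (show k < k + l by omega), hcc₁ k le_rfl, hc₁z]

end

def seqShift {α : Type*} (q : ℕ → α) : ℕ → α := fun i => q (i + 1)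

theorem isPeriodicPt_seqShift_iff {α : Type*} {q : ℕ → α} {m : ℕ} :
    IsPeriodicPt seqShift m q ↔ Periodic q m := by
  have hiter : ∀ m i, seqShift^[m] q i = q (i + m) := by
    intro m
    induction m with
    | zero => intro i; rfl
    | succ m ih => intro i; rw [iterate_succ_apply', seqShift, ih, add_right_comm, add_assoc]
  simp only [IsPeriodicPt, IsFixedPt, funext_iff, hiter, Periodic]

theorem exists_minimal_period_of_three_mul {α : Type*} {q : ℕ → α} {n : ℕ} (hn : 0 < n)
    (h3n : Periodic q (3 * n)) (h2n : q (2 * n) ≠ q 0) :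
    ∃ s : ℕ, 0 < s ∧ Periodic q s ∧ (∀ m, 0 < m → Periodic q m → s ≤ m) ∧
      s ∣ 3 * n ∧ ¬ s ∣ n ∧ ¬ s ∣ 2 * n ∧ 3 ∣ s ∧ ∀ a : ℕ, s ≠ 2 ^ a := by
  have h3n : IsPeriodicPt seqShift (3 * n) q := isPeriodicPt_seqShift_iff.2 h3n
  set s := minimalPeriod seqShift q
  have hs2n : ¬ s ∣ 2 * n := fun h => h2n <| by
    simpa using isPeriodicPt_seqShift_iff.1 (isPeriodicPt_iff_minimalPeriod_dvd.2 h) 0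
  have hsn : ¬ s ∣ n := fun h => hs2n (h.mul_left 2)
  have h3s : 3 ∣ s := by
    by_contra h3
    exact hsn ((Nat.Coprime.dvd_of_dvd_mul_left
      ((Nat.Prime.coprime_iff_not_dvd Nat.prime_three).2 h3).symm h3n.minimalPeriod_dvd))
  refine ⟨s, h3n.minimalPeriod_pos (by omega),
    isPeriodicPt_seqShift_iff.1 (isPeriodicPt_minimalPeriod _ _),
    fun m hm hqm => (isPeriodicPt_seqShift_iff.2 hqm).minimalPeriod_le hm,
    h3n.minimalPeriod_dvd, hsn, hs2n, h3s, fun a ha => ?_⟩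
  have := Nat.Prime.dvd_of_dvd_pow Nat.prime_three (ha ▸ h3s)
  omega

theorem stmt16_general (f : ℝ → Set ℝ) (hf : USC f) (hivp : IVP f)
    (n : ℕ) (hn : 0 < n) (x y z : ℝ) (hxy : x < y)
    (hx : x ∈ Icc (0:ℝ) 1) (hz : z ∈ Icc (0:ℝ) 1)
    (a₁ b₁ a₂ b₂ a₃ b₃ : ℝ) (h₁ : a₁ ≤ b₁)
    (hJ1 : Icc a₁ b₁ ⊆ Ico x y)
    (hJ3 : Icc a₃ b₃ ⊆ Icc y z)
    (hc1 : Icc a₂ b₂ ⊆ imIter f n (Icc a₃ b₃))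
    (hc2 : Icc a₁ b₁ ⊆ imIter f n (Icc a₂ b₂))
    (hc3 : Icc y z ⊆ imIter f n (Icc a₁ b₁)) :
    ∃ (q : ℕ → ℝ) (s : ℕ), 0 < s ∧ (∀ i, q (i + 1) ∈ f (q i)) ∧
      Function.Periodic q s ∧ (∀ m, 0 < m → Function.Periodic q m → s ≤ m) ∧
      s ∣ 3 * n ∧ ¬ s ∣ n ∧ ¬ s ∣ 2 * n ∧ 3 ∣ s ∧ ∀ a : ℕ, s ≠ 2 ^ a := by
  have hJ₃ : Icc a₃ b₃ ⊆ Icc 0 1 := hJ3.trans (Icc_subset_Icc (hx.1.trans hxy.le) hz.2)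
  have hJ₂ : Icc a₂ b₂ ⊆ Icc 0 1 := hc1.trans (hf.imIter_subset n hJ₃)
  have hJ₁ : Icc a₁ b₁ ⊆ Icc 0 1 := hc2.trans (hf.imIter_subset n hJ₂)
  rw [← uIcc_of_le h₁] at hJ₁ hc2 hc3 hJ1
  obtain ⟨t, ht, s₁, hs₁, s₂, hs₂, hs₂J₁, hts₂⟩ := exists_three_cycle_of_covers
    (IVP.intermediateValueOn_fIter hf hivp n) (hf.isCompact_graphOver_fIter n)
    (fun _ => hf.fIter_nonempty n) isCompact_Icc ordConnected_Icc hJ₃ isCompact_Icc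
    ordConnected_Icc hJ₂ hJ₁ hc1 hc2 (hJ3.trans hc3)
  obtain ⟨q, hq0, hq2n, hper, hq⟩ := exists_periodic_orbit hn (mem_fIter_add hs₁ hs₂) hts₂
  have hq2n : q (2 * n) ≠ q 0 := by
    rw [two_mul, hq2n, hq0]
    exact ((hJ1 hs₂J₁).2.trans_le (hJ3 ht).1).ne
  obtain ⟨s, hs, hs'⟩ := exists_minimal_period_of_three_mul hn
    (by rwa [show 3 * n = n + n + n by ring]) hq2n
  exact ⟨q, s, hs, hq, hs'⟩

/-- the covering pattern `J₃ → J₂ → J₁ → [y,z] ⊇ J₃` under `f^n`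
yields a periodic cycle whose period `s` satisfies `s ∣ 3n`, `s ∤ n`, `s ∤ 2n`;
in particular `3 ∣ s` and `s` is not a power of `2`. -/
theorem stmt16 (f : ℝ → Set ℝ) (hf : USC f) (hivp : IVP f)
    (n : ℕ) (hn : 0 < n) (x y z : ℝ) (hxy : x < y) (hyz : y < z)
    (hx : x ∈ Icc (0:ℝ) 1) (hz : z ∈ Icc (0:ℝ) 1)
    (a₁ b₁ a₂ b₂ a₃ b₃ : ℝ) (h₁ : a₁ ≤ b₁) (h₂ : a₂ ≤ b₂) (h₃ : a₃ ≤ b₃)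
    (hJ1 : Icc a₁ b₁ ⊆ Ico x y) (hJ2 : Icc a₂ b₂ ⊆ Icc x y)
    (hJ3 : Icc a₃ b₃ ⊆ Icc y z)
    (hc1 : Icc a₂ b₂ ⊆ imIter f n (Icc a₃ b₃))
    (hc2 : Icc a₁ b₁ ⊆ imIter f n (Icc a₂ b₂))
    (hc3 : Icc y z ⊆ imIter f n (Icc a₁ b₁))
    (hyJ1 : y ∉ Icc a₁ b₁) :
    ∃ (q : ℕ → ℝ) (s : ℕ), 0 < s ∧ (∀ i, q (i + 1) ∈ f (q i)) ∧
      Function.Periodic q s ∧ (∀ m, 0 < m → Function.Periodic q m → s ≤ m) ∧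
      s ∣ 3 * n ∧ ¬ s ∣ n ∧ ¬ s ∣ 2 * n ∧ 3 ∣ s ∧ ∀ a : ℕ, s ≠ 2 ^ a :=
  stmt16_general f hf hivp n hn x y z hxy hx hz a₁ b₁ a₂ b₂ a₃ b₃ h₁ hJ1 hJ3 hc1 hc2 hc3
end

section
/- Let {X_n, f_n} be an inverse sequence of compact metric spaces with upper semicontinuous set-valued bonding functions and X = lim←{X_n, f_n}. Call a point (x₀,x₁,…) ∈ X fissile if |f_n(x_n)| > 1 for some n. If the set of fissile points of X is meager in X, then X has the full-projection property: every subcontinuum K of X whose projection π_i[K] equals X_i for infinitely many i must equal X. -/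
open Set Filter Topology

/-- if the fissile points of the inverse limit are meager,
then the inverse limit has the full-projection property. -/
theorem stmt18 (X : ℕ → Type*) [∀ n, MetricSpace (X n)] [∀ n, CompactSpace (X n)]
    (f : ∀ n : ℕ, X (n + 1) → Set (X n))
    (hne : ∀ n x, (f n x).Nonempty)
    (hcv : ∀ n x, IsCompact (f n x))
    (hclosed : ∀ n, IsClosed {p : X (n + 1) × X n | p.2 ∈ f n p.1})
    (L : Set (∀ n, X n)) (hL : L = {z | ∀ n, z n ∈ f n (z (n + 1))})
    (hmeager : IsMeagre {z : ↥L | ∃ n, ¬ (f n ((z : ∀ n, X n) (n + 1))).Subsingleton}) :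
    ∀ K ⊆ L, IsCompact K → IsConnected K →
      {i : ℕ | (fun z : ∀ n, X n => z i) '' K = Set.univ}.Infinite →
      K = L := by
  intro K hKL hKc _hKconn hinf
  have hLmem : ∀ z ∈ L, ∀ n, z n ∈ f n (z (n + 1)) := by
    intro z hz n; rw [hL] at hz; exact hz n
  have hLclosed : IsClosed L := by
    rw [hL]
    have heq : {z : ∀ n, X n | ∀ n, z n ∈ f n (z (n + 1))} =
        ⋂ n, (fun z : ∀ n, X n => ((z (n + 1), z n) : X (n + 1) × X n)) ⁻¹'
          {p : X (n + 1) × X n | p.2 ∈ f n p.1} := by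
      ext z; simp [Set.mem_iInter]
    rw [heq]
    exact isClosed_iInter fun n => (hclosed n).preimage
      ((continuous_apply (n + 1)).prodMk (continuous_apply n))
  have hKclosed : IsClosed K := hKc.isClosed
  -- every non-fissile point of L is in K
  have key : ∀ z ∈ L, (∀ n, (f n (z (n + 1))).Subsingleton) → z ∈ K := by
    intro z hz hsub
    have hex : ∀ n : ℕ, ∃ y ∈ K, ∀ j ≤ n, y j = z j := by
      intro n
      obtain ⟨i, hiI, hni⟩ : ∃ i, (fun w : ∀ n, X n => w i) '' K = Set.univ ∧ n ≤ i := by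
        obtain ⟨i, hi1, hi2⟩ := hinf.exists_gt n
        exact ⟨i, hi1, hi2.le⟩
      have hzi : z i ∈ (fun w : ∀ n, X n => w i) '' K := by rw [hiI]; trivial
      obtain ⟨y, hyK, hyi⟩ := hzi
      refine ⟨y, hyK, ?_⟩
      have main : ∀ d, ∀ j, j + d = i → y j = z j := by
        intro d
        induction d with
        | zero =>
          intro j hj
          obtain rfl : j = i := by omega
          exact hyi
        | succ d ih =>
          intro j hj
          have hj1 : (j + 1) + d = i := by omega
          have h1 : y (j + 1) = z (j + 1) := ih (j + 1) hj1
          have hy : y j ∈ f j (z (j + 1)) := by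
            rw [← h1]; exact hLmem y (hKL hyK) j
          exact hsub j hy (hLmem z hz j)
      intro j hjn
      exact main (i - j) j (by omega)
    choose yseq hyK hyz using hex
    have htend : Tendsto yseq atTop (𝓝 z) := by
      rw [tendsto_pi_nhds]
      intro j
      refine Tendsto.congr' ?_ (tendsto_const_nhds (x := z j))
      filter_upwards [eventually_ge_atTop j] with n hn
      exact (hyz n j hn).symm
    exact hKclosed.mem_of_tendsto htend (Eventually.of_forall hyK)
  haveI : CompactSpace ↥L := isCompact_iff_compactSpace.mp hLclosed.isCompact
  have hdense : Dense {z : ↥L | ∀ n, (f n ((z : ∀ n, X n) (n + 1))).Subsingleton} := by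
    have h := dense_of_mem_residual (s := {z : ↥L |
        ∃ n, ¬ (f n ((z : ∀ n, X n) (n + 1))).Subsingleton}ᶜ) hmeager
    simpa [Set.compl_setOf] using h
  refine Set.Subset.antisymm hKL fun w hw => ?_
  have hsubK : {z : ↥L | ∀ n, (f n ((z : ∀ n, X n) (n + 1))).Subsingleton} ⊆
      (fun z : ↥L => (z : ∀ n, X n)) ⁻¹' K := fun z hzn => key z z.2 hzn
  have hKcl' : IsClosed ((fun z : ↥L => (z : ∀ n, X n)) ⁻¹' K) :=
    hKclosed.preimage continuous_subtype_val
  have hcl : (⟨w, hw⟩ : ↥L) ∈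
      closure {z : ↥L | ∀ n, (f n ((z : ∀ n, X n) (n + 1))).Subsingleton} := by
    rw [hdense.closure_eq]; trivial
  exact (hKcl'.closure_subset_iff.mpr hsubK) hcl
end
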